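/- Let ε > 0, let ν be a nonnegative Borel measure on ℝ with ν({0}) = 0, ν(ℝ \ [−ε, ε]) = 0 and ∫ x² dν(x) < ∞, and suppose ∫_{(0,∞)} x dν(x) = ∞. Let b ∈ ℝ and define g(u) := b + ∫ (e^{ux} − 1) x dν(x). Then g has exactly one root: there is a unique u* ∈ ℝ with g(u*) = 0. -/

import Mathlib

/-!
`g - b` is continuous by dominated convergence, since on the support
`|(e^{ux} - 1) x| ≤ |u| e^{|u| ε} x²`, and strictly increasing because the integrand is
and `ν` charges `(0, ∞)`. As `u → ∞` it grows at least like `u ∫_{x>0} x² dν`. As `u → -∞`,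
`b - g(u) ≥ ∫_{x>0} (1 - e^{ux}) x dν`, which tends to `∫_{x>0} x dν = ∞` by monotone
convergence. Hence `g` is a strictly increasing bijection of `ℝ`.
-/

open MeasureTheory Real Set Filter Topology

lemma abs_exp_sub_one_le_mul_exp_abs (t : ℝ) : |exp t - 1| ≤ |t| * exp |t| := by
  have lower : t ≤ exp t - 1 := by linarith [add_one_le_exp t]
  have upper : exp t - 1 ≤ t * exp t := by
    have h := mul_le_mul_of_nonneg_right (add_one_le_exp (-t)) (exp_pos t).le
    rw [← exp_add, neg_add_cancel, exp_zero] at h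
    linarith
  have h1 : 1 ≤ exp |t| := one_le_exp (abs_nonneg t)
  have h2 : exp t ≤ exp |t| := exp_le_exp.2 (le_abs_self t)
  rw [abs_le]
  constructor <;> nlinarith [abs_nonneg t, neg_abs_le t, le_abs_self t, exp_pos t]

lemma abs_exp_mul_sub_one_mul_le {R ε u x : ℝ} (hu : |u| ≤ R) (hx : |x| ≤ ε) :
    |(exp (u * x) - 1) * x| ≤ R * exp (R * ε) * x ^ 2 := by
  have hR : 0 ≤ R := (abs_nonneg u).trans hu
  have hux : |u * x| ≤ R * |x| := by
    rw [abs_mul]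
    exact mul_le_mul_of_nonneg_right hu (abs_nonneg x)
  have hexp : exp |u * x| ≤ exp (R * ε) :=
    exp_le_exp.2 (hux.trans (mul_le_mul_of_nonneg_left hx hR))
  calc |(exp (u * x) - 1) * x| ≤ |u * x| * exp |u * x| * |x| := by
        rw [abs_mul]
        gcongr
        exact abs_exp_sub_one_le_mul_exp_abs _
    _ ≤ R * |x| * exp (R * ε) * |x| := by gcongr
    _ = R * exp (R * ε) * x ^ 2 := by rw [← sq_abs]; ring

lemma strictMono_exp_mul_sub_one_mul {x : ℝ} (hx : x ≠ 0) :
    StrictMono fun u => (exp (u * x) - 1) * x := by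
  intro u v huv
  rcases hx.lt_or_gt with hx | hx
  · have : exp (v * x) < exp (u * x) := exp_lt_exp.2 (mul_lt_mul_of_neg_right huv hx)
    nlinarith
  · have : exp (u * x) < exp (v * x) := exp_lt_exp.2 (mul_lt_mul_of_pos_right huv hx)
    nlinarith

lemma monotone_exp_mul_sub_one_mul (x : ℝ) : Monotone fun u => (exp (u * x) - 1) * x := by
  rcases eq_or_ne x 0 with rfl | hx
  · simp [monotone_const]
  · exact (strictMono_exp_mul_sub_one_mul hx).monotone

noncomputable def expTiltMoment (ν : Measure ℝ) (u : ℝ) : ℝ :=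
  ∫ x, (exp (u * x) - 1) * x ∂ν

section

variable {ν : Measure ℝ} {ε : ℝ}

lemma integrable_exp_mul_sub_one_mul (hsupp : ∀ᵐ x ∂ν, |x| ≤ ε)
    (hsq : Integrable (fun x => x ^ 2) ν) (u : ℝ) :
    Integrable (fun x => (exp (u * x) - 1) * x) ν :=
  (hsq.const_mul (|u| * exp (|u| * ε))).mono' (by fun_prop)
    (hsupp.mono fun _ hx => abs_exp_mul_sub_one_mul_le le_rfl hx)

lemma continuous_expTiltMoment (hsupp : ∀ᵐ x ∂ν, |x| ≤ ε)
    (hsq : Integrable (fun x => x ^ 2) ν) : Continuous (expTiltMoment ν) := by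
  refine continuous_iff_continuousAt.2 fun u₀ => continuousAt_of_dominated
    (bound := fun x => (|u₀| + 1) * exp ((|u₀| + 1) * ε) * x ^ 2)
    (Eventually.of_forall fun u => by fun_prop) ?_ (hsq.const_mul _)
    (Eventually.of_forall fun x => by fun_prop)
  filter_upwards [Metric.ball_mem_nhds u₀ one_pos] with u hu
  have hu : |u| ≤ |u₀| + 1 := by
    have := abs_sub_abs_le_abs_sub u u₀
    rw [Metric.mem_ball, Real.dist_eq] at hu
    linarith
  exact hsupp.mono fun _ hx => abs_exp_mul_sub_one_mul_le hu hx

lemma monotone_expTiltMoment (hsupp : ∀ᵐ x ∂ν, |x| ≤ ε)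
    (hsq : Integrable (fun x => x ^ 2) ν) : Monotone (expTiltMoment ν) := fun u v huv =>
  integral_mono (integrable_exp_mul_sub_one_mul hsupp hsq u)
    (integrable_exp_mul_sub_one_mul hsupp hsq v) fun x => monotone_exp_mul_sub_one_mul x huv

lemma strictMono_expTiltMoment (hsupp : ∀ᵐ x ∂ν, |x| ≤ ε)
    (hsq : Integrable (fun x => x ^ 2) ν) (hν : ν {0}ᶜ ≠ 0) :
    StrictMono (expTiltMoment ν) := by
  intro u v huv
  have hint := integrable_exp_mul_sub_one_mul hsupp hsq
  have hpos : 0 < ∫ x, ((exp (v * x) - 1) * x - (exp (u * x) - 1) * x) ∂ν := by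
    rw [integral_pos_iff_support_of_nonneg
      (fun x => sub_nonneg.2 (monotone_exp_mul_sub_one_mul x huv.le)) ((hint v).sub (hint u))]
    refine (pos_iff_ne_zero.2 hν).trans_le (measure_mono fun x hx => ?_)
    exact sub_ne_zero.2 (strictMono_exp_mul_sub_one_mul hx huv).ne'
  rw [integral_sub (hint v) (hint u)] at hpos
  exact sub_pos.1 hpos

lemma mul_setIntegral_sq_le_expTiltMoment (hsupp : ∀ᵐ x ∂ν, |x| ≤ ε)
    (hsq : Integrable (fun x => x ^ 2) ν) {u : ℝ} (hu : 0 ≤ u) :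
    u * ∫ x in Ioi 0, x ^ 2 ∂ν ≤ expTiltMoment ν u := by
  have hint := integrable_exp_mul_sub_one_mul hsupp hsq u
  calc u * ∫ x in Ioi 0, x ^ 2 ∂ν = ∫ x in Ioi 0, u * x ^ 2 ∂ν :=
        (integral_const_mul _ _).symm
    _ ≤ ∫ x in Ioi 0, (exp (u * x) - 1) * x ∂ν :=
        setIntegral_mono_on (hsq.const_mul u).integrableOn hint.integrableOn measurableSet_Ioi
          fun x (hx : 0 < x) => by nlinarith [add_one_le_exp (u * x)]
    _ ≤ expTiltMoment ν u := setIntegral_le_integral hint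
        (Eventually.of_forall fun x => by simpa using monotone_exp_mul_sub_one_mul x hu)

lemma tendsto_expTiltMoment_atTop (hsupp : ∀ᵐ x ∂ν, |x| ≤ ε)
    (hsq : Integrable (fun x => x ^ 2) ν) (hν : ν (Ioi 0) ≠ 0) :
    Tendsto (expTiltMoment ν) atTop atTop := by
  have hc : 0 < ∫ x in Ioi 0, x ^ 2 ∂ν := by
    rw [setIntegral_pos_iff_support_of_nonneg_ae (Eventually.of_forall fun x => sq_nonneg x)
      hsq.integrableOn]
    exact (pos_iff_ne_zero.2 hν).trans_le
      (measure_mono fun x (hx : 0 < x) => ⟨pow_ne_zero 2 hx.ne', hx⟩)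
  refine tendsto_atTop_mono' atTop ?_ (tendsto_id.atTop_mul_const hc)
  filter_upwards [eventually_ge_atTop 0] with u hu
    using mul_setIntegral_sq_le_expTiltMoment hsupp hsq hu

lemma tendsto_neg_exp_neg_natCast_mul_sub_one_mul (x : ℝ) (hx : 0 < x) :
    Tendsto (fun n : ℕ => -((exp (-n * x) - 1) * x)) atTop (𝓝 x) := by
  have hexp : Tendsto (fun n : ℕ => exp (-n * x)) atTop (𝓝 0) := by
    simp only [neg_mul]
    exact tendsto_exp_atBot.comp
      (tendsto_neg_atTop_atBot.comp (tendsto_natCast_atTop_atTop.atTop_mul_const hx))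
  simpa using ((hexp.sub_const 1).mul_const x).neg

lemma tendsto_expTiltMoment_atBot (hsupp : ∀ᵐ x ∂ν, |x| ≤ ε)
    (hsq : Integrable (fun x => x ^ 2) ν)
    (hinf : ∫⁻ x in Ioi 0, ENNReal.ofReal x ∂ν = ⊤) :
    Tendsto (expTiltMoment ν) atBot atBot := by
  have hlim : Tendsto
      (fun n : ℕ => ∫⁻ x in Ioi 0, ENNReal.ofReal (-((exp (-n * x) - 1) * x)) ∂ν)
      atTop (𝓝 ⊤) := by
    rw [← hinf]
    refine lintegral_tendsto_of_tendsto_of_monotone (fun n => by fun_prop) ?_ ?_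
    · refine Eventually.of_forall fun x m n hmn => ENNReal.ofReal_le_ofReal (neg_le_neg ?_)
      exact monotone_exp_mul_sub_one_mul x (neg_le_neg (Nat.cast_le.2 hmn))
    · filter_upwards [ae_restrict_mem measurableSet_Ioi] with x hx
      exact ENNReal.tendsto_ofReal (tendsto_neg_exp_neg_natCast_mul_sub_one_mul x hx)
  refine (monotone_expTiltMoment hsupp hsq).tendsto_atBot_atBot fun M => ?_
  obtain ⟨n, hn⟩ := (hlim.eventually (lt_mem_nhds (ENNReal.ofReal_lt_top (r := -M)))).exists
  refine ⟨-n, ?_⟩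
  have hint : Integrable (fun x => -((exp (-n * x) - 1) * x)) ν :=
    (integrable_exp_mul_sub_one_mul hsupp hsq (-n)).neg
  have hnonneg : 0 ≤ᵐ[ν] fun x => -((exp (-n * x) - 1) * x) :=
    Eventually.of_forall fun x => by
      simpa using monotone_exp_mul_sub_one_mul x (by simp : -(n : ℝ) ≤ 0)
  have : ENNReal.ofReal (-M) < ENNReal.ofReal (-expTiltMoment ν (-n)) := by
    rw [expTiltMoment, ← integral_neg, ofReal_integral_eq_lintegral_ofReal hint hnonneg]
    exact hn.trans_le (setLIntegral_le_lintegral _ _)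
  linarith [((ENNReal.ofReal_lt_ofReal_iff').1 this).1]

end

theorem stmt_17_general (ε : ℝ) (ν : Measure ℝ)
    (hsupp : ν (Icc (-ε) ε)ᶜ = 0)
    (hmom : ∫⁻ x, ENNReal.ofReal (x ^ 2) ∂ν < ⊤)
    (hinf : ∫⁻ x in Ioi (0 : ℝ), ENNReal.ofReal x ∂ν = ⊤)
    (b : ℝ) (g : ℝ → ℝ)
    (hg : ∀ u : ℝ, g u = b + ∫ x, (Real.exp (u * x) - 1) * x ∂ν) :
    ∃! u : ℝ, g u = 0 := by
  have hbdd : ∀ᵐ x ∂ν, |x| ≤ ε :=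
    (measure_eq_zero_iff_ae_notMem.1 hsupp).mono fun x hx => abs_le.2 (not_not.1 hx)
  have hsq : Integrable (fun x => x ^ 2) ν :=
    ⟨by fun_prop, (hasFiniteIntegral_iff_ofReal (ae_of_all _ sq_nonneg)).2 hmom⟩
  have hpos : ν (Ioi 0) ≠ 0 := fun h => by simp [Measure.restrict_eq_zero.2 h] at hinf
  obtain rfl : g = fun u => b + expTiltMoment ν u := funext hg
  have hcharged : ν {0}ᶜ ≠ 0 := fun h => hpos (measure_mono_null (fun x hx => hx.ne') h)
  have hmono : StrictMono fun u => b + expTiltMoment ν u :=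
    (strictMono_expTiltMoment hbdd hsq hcharged).const_add b
  obtain ⟨u, hu⟩ := ((continuous_expTiltMoment hbdd hsq).const_add b).surjective
    (tendsto_atTop_add_const_left _ b (tendsto_expTiltMoment_atTop hbdd hsq hpos))
    (tendsto_atBot_add_const_left _ b (tendsto_expTiltMoment_atBot hbdd hsq hinf)) 0
  exact ⟨u, hu, fun v hv => hmono.injective (hv.trans hu.symm)⟩

/-- Case 2 in the proof of Lemma 3.2 (`σ = 0`, infinite variation on the positive side):
for a Lévy measure `ν` supported in `[−ε, ε]` with finite second moment but
`∫_{(0,∞)} x dν = ∞`, the function `g(u) = b + ∫ (e^{ux} − 1)x dν` has exactly one root. -/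
theorem stmt_17 (ε : ℝ) (hε : 0 < ε) (ν : Measure ℝ) (hν0 : ν {0} = 0)
    (hsupp : ν (Icc (-ε) ε)ᶜ = 0)
    (hmom : ∫⁻ x, ENNReal.ofReal (x ^ 2) ∂ν < ⊤)
    (hinf : ∫⁻ x in Ioi (0 : ℝ), ENNReal.ofReal x ∂ν = ⊤)
    (b : ℝ) (g : ℝ → ℝ)
    (hg : ∀ u : ℝ, g u = b + ∫ x, (Real.exp (u * x) - 1) * x ∂ν) :
    ∃! u : ℝ, g u = 0 :=
  stmt_17_general ε ν hsupp hmom hinf b g hg
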